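/- For every integer p ≥ 1 and every integer n ≥ 0, the distance cube polynomial of the Fibonacci p-cube satisfies the polynomial identity D_{Γ^p_n}(x,q) = Σ_{k,d≥0} c_{k,d}(Γ^p_n) x^k q^d = Σ_{a=0}^{⌊(n+p)/(p+1)⌋} C(n − ap + p, a)·(q+x)^a. -/

import Mathlib

/-- Fibonacci `p`-numbers: `F^p_0 = 0`, `F^p_m = 1` for `1 ≤ m ≤ p`,
and `F^p_m = F^p_{m-1} + F^p_{m-p-1}` for `m ≥ p+1`. -/
def fibP (p : ℕ) : ℕ → ℕ
  | 0 => 0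
  | m + 1 => if m + 1 ≤ p then 1 else fibP p m + fibP p (m - p)

/-- A Fibonacci `p`-string of length `n`: any two `1`s are separated by at least `p` `0`s. -/
def IsFibStr (p : ℕ) {n : ℕ} (u : Fin n → Bool) : Prop :=
  ∀ i j : Fin n, u i = true → u j = true → (i : ℕ) < (j : ℕ) → (i : ℕ) + p + 1 ≤ (j : ℕ)

instance (p n : ℕ) : DecidablePred fun u : Fin n → Bool => IsFibStr p u := fun u =>
  decidable_of_iff
    (∀ i j : Fin n, u i = true → u j = true → (i : ℕ) < (j : ℕ) → (i : ℕ) + p + 1 ≤ (j : ℕ))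
    Iff.rfl

/-- Hamming weight of a binary string. -/
def wt {n : ℕ} (u : Fin n → Bool) : ℕ := (Finset.univ.filter fun i => u i = true).card

/-- The Fibonacci `p`-cube `Γ^p_n`. -/
def FibCube (p n : ℕ) : SimpleGraph {u : Fin n → Bool // IsFibStr p u} where
  Adj u v := (Finset.univ.filter fun i => u.1 i ≠ v.1 i).card = 1
  symm := by
    constructor
    intro u v h
    have : (Finset.univ.filter fun i => v.1 i ≠ u.1 i)
        = (Finset.univ.filter fun i => u.1 i ≠ v.1 i) := by
      apply Finset.filter_congr
      intro i _
      simp [ne_comm]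
    rw [this]
    exact h
  loopless := by constructor; intro u h; simp at h

instance (p n : ℕ) : DecidableRel (FibCube p n).Adj := fun u v =>
  decidable_of_iff ((Finset.univ.filter fun i => u.1 i ≠ v.1 i).card = 1) Iff.rfl

/-- `c_k(Γ^p_n)`: induced `Q_k`-subgraphs, encoded as pairs (bottom, top). -/
noncomputable def cubeCount (p n k : ℕ) : ℕ :=
  Nat.card {bt : (Fin n → Bool) × (Fin n → Bool) //
    IsFibStr p bt.1 ∧ IsFibStr p bt.2 ∧ (∀ i, bt.1 i = true → bt.2 i = true) ∧
    (Finset.univ.filter fun i => bt.1 i ≠ bt.2 i).card = k}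

/-- `c_{k,d}(Γ^p_n)`: induced `Q_k`-subgraphs with bottom vertex of weight `d`. -/
noncomputable def cubeCountD (p n k d : ℕ) : ℕ :=
  Nat.card {bt : (Fin n → Bool) × (Fin n → Bool) //
    IsFibStr p bt.1 ∧ IsFibStr p bt.2 ∧ (∀ i, bt.1 i = true → bt.2 i = true) ∧
    (Finset.univ.filter fun i => bt.1 i ≠ bt.2 i).card = k ∧ wt bt.1 = d}

/-- Weight enumerator polynomial of `Γ^p_n`. -/
noncomputable def weightPoly (p n : ℕ) : Polynomial ℤ :=
  ∑ u : {u : Fin n → Bool // IsFibStr p u}, Polynomial.X ^ wt u.1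

/-- Distance cube polynomial of `Γ^p_n`, in variables `X 0 = x` and `X 1 = q`. -/
noncomputable def distCubePoly (p n : ℕ) : MvPolynomial (Fin 2) ℤ :=
  ∑ k ∈ Finset.range (n + 1), ∑ d ∈ Finset.range (n + 1),
    (cubeCountD p n k d : MvPolynomial (Fin 2) ℤ) *
      MvPolynomial.X 0 ^ k * MvPolynomial.X 1 ^ d

/-- Flip coordinate `j` of a binary string (`u + δ_j`). -/
def flipCoord {n : ℕ} (u : Fin n → Bool) (j : Fin n) : Fin n → Bool :=
  Function.update u j (!u j)
open Finset

/-- chain inequality from a one-step gap condition -/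
lemma chain_aux {a m δ : ℕ} {g : Fin a → Fin m}
    (h : ∀ i j : Fin a, (i : ℕ) < (j : ℕ) → (g i : ℕ) + δ ≤ (g j : ℕ)) :
    ∀ (c : ℕ) (i j : Fin a), (i : ℕ) + c ≤ (j : ℕ) → (g i : ℕ) + c * δ ≤ (g j : ℕ) := by
  intro c
  induction c with
  | zero =>
    intro i j hij
    rcases eq_or_lt_of_le (by omega : (i : ℕ) ≤ (j : ℕ)) with he | hl
    · have : i = j := Fin.ext he
      simp [this]
    · have := h i j hl; omega
  | succ c ih =>
    intro i j hij
    have hj1 : (j : ℕ) - 1 < a := by omega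
    set j' : Fin a := ⟨(j : ℕ) - 1, hj1⟩ with hj'
    have h1 := ih i j' (by simp [hj']; omega)
    have h2 := h j' j (by simp [hj']; omega)
    have : (c + 1) * δ = c * δ + δ := by ring
    omega

/-- Fibonacci strings of weight `a` ≃ spread increasing `a`-tuples. -/
def fibStrEquivSpread (p n a : ℕ) :
    {u : Fin n → Bool // IsFibStr p u ∧ wt u = a} ≃
    {f : Fin a → Fin n // ∀ i j : Fin a, (i : ℕ) < (j : ℕ) → (f i : ℕ) + p + 1 ≤ (f j : ℕ)} where
  toFun u := ⟨fun j => (Finset.univ.filter fun i => u.1 i = true).orderEmbOfFin u.2.2 j, by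
    intro i j hij
    have hmi := (Finset.orderEmbOfFin_mem (Finset.univ.filter fun i => u.1 i = true) u.2.2 i)
    have hmj := (Finset.orderEmbOfFin_mem (Finset.univ.filter fun i => u.1 i = true) u.2.2 j)
    rw [Finset.mem_filter] at hmi hmj
    exact u.2.1 _ _ hmi.2 hmj.2
      (((Finset.univ.filter fun i => u.1 i = true).orderEmbOfFin u.2.2).strictMono
        (show i < j from hij))⟩
  invFun f := ⟨fun i => decide (i ∈ Finset.univ.image f.1), by
    constructor
    · intro i j hi hj hij
      simp only [decide_eq_true_eq, Finset.mem_image] at hi hj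
      obtain ⟨x, -, rfl⟩ := hi
      obtain ⟨y, -, rfl⟩ := hj
      have hxy : (x : ℕ) < (y : ℕ) := by
        by_contra hc
        rcases eq_or_lt_of_le (by omega : (y : ℕ) ≤ (x : ℕ)) with he | hl
        · have : ((f.1 y : ℕ)) = f.1 x := by rw [show y = x from Fin.ext he]
          omega
        · have := f.2 y x hl; omega
      exact f.2 x y hxy
    · show (Finset.univ.filter fun i => decide (i ∈ Finset.univ.image f.1) = true).card = a
      have : (Finset.univ.filter fun i => decide (i ∈ Finset.univ.image f.1) = true)
          = Finset.univ.image f.1 := by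
        ext i; simp
      rw [this, Finset.card_image_of_injective _ (show StrictMono f.1 from
        fun i j hij => by have := f.2 i j hij; exact (by omega : ((f.1 i : ℕ)) < f.1 j)).injective]
      simp⟩
  left_inv := by
    rintro ⟨u, hu, hw⟩
    apply Subtype.ext
    funext i
    have himg : Finset.univ.image ((Finset.univ.filter fun i => u i = true).orderEmbOfFin hw)
        = Finset.univ.filter fun i => u i = true := by
      apply Finset.coe_injective
      rw [Finset.coe_image, Finset.coe_univ, Set.image_univ]
      exact Finset.range_orderEmbOfFin _ hw
    show decide (i ∈ Finset.univ.image _) = u i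
    rw [himg]
    cases h : u i <;> simp [h]
  right_inv := by
    rintro ⟨f, hf⟩
    apply Subtype.ext
    have hsm : StrictMono f := fun i j hij => by
      have := hf i j hij; exact (by omega : ((f i : ℕ)) < f j)
    have hmem : ∀ x, f x ∈ Finset.univ.filter
        (fun i => decide (i ∈ Finset.univ.image f) = true) := by
      intro x
      simp only [Finset.mem_filter, Finset.mem_univ, true_and, decide_eq_true_eq,
        Finset.mem_image]
      exact ⟨x, rfl⟩
    exact (Finset.orderEmbOfFin_unique _ hmem hsm).symm

/-- spread tuples in `Fin n` ≃ strictly monotone tuples in `Fin (n + p - a*p)`. -/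
def spreadEquivMono (p n a : ℕ) :
    {f : Fin a → Fin n // ∀ i j : Fin a, (i : ℕ) < (j : ℕ) → (f i : ℕ) + p + 1 ≤ (f j : ℕ)} ≃
    {g : Fin a → Fin (n + p - a * p) // StrictMono g} where
  toFun f := by
    have hf' : ∀ i j : Fin a, (i : ℕ) < (j : ℕ) → (f.1 i : ℕ) + (p + 1) ≤ (f.1 j : ℕ) :=
      fun i j h => by have := f.2 i j h; omega
    refine ⟨fun j => ⟨(f.1 j : ℕ) - p * (j : ℕ), ?_⟩, ?_⟩
    · have hja : (j : ℕ) < a := j.2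
      have hz : (0 : ℕ) < a := by omega
      have hlow := chain_aux hf' (j : ℕ) ⟨0, hz⟩ j (by simp)
      have hhigh := chain_aux hf' ((a - 1) - (j : ℕ)) j ⟨a - 1, by omega⟩ (by simp; omega)
      have hfb : ((f.1 ⟨a - 1, by omega⟩ : ℕ)) < n := (f.1 _).2
      set t := (j : ℕ)
      set r := (a - 1) - t with hr
      have har : a = t + r + 1 := by omega
      have h1 : a * p = t * p + r * p + p := by rw [har]; ring
      have h2 : r * (p + 1) = r * p + r := by ring
      have h3 : t * (p + 1) = t * p + t := by ring
      have h4 : p * t = t * p := by ring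
      omega
    · intro i j hij
      have hij' : (i : ℕ) < (j : ℕ) := hij
      have hz : (0 : ℕ) < a := by have := j.2; omega
      have hchain := chain_aux hf' ((j : ℕ) - (i : ℕ)) i j (by omega)
      have hlowi := chain_aux hf' (i : ℕ) ⟨0, hz⟩ i (by simp)
      have hlowj := chain_aux hf' (j : ℕ) ⟨0, hz⟩ j (by simp)
      show ((f.1 i : ℕ) - p * (i : ℕ)) < ((f.1 j : ℕ) - p * (j : ℕ))
      set c := (j : ℕ) - (i : ℕ) with hc
      have h1 : c * (p + 1) = c * p + c := by ring
      have h2 : p * (j : ℕ) = p * (i : ℕ) + p * c := by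
        rw [show (j:ℕ) = (i:ℕ) + c by omega]; ring
      have h3 : p * c = c * p := by ring
      have h4 : (i : ℕ) * (p + 1) = (i:ℕ) * p + (i:ℕ) := by ring
      have h5 : (i:ℕ) * p = p * (i:ℕ) := by ring
      omega
  invFun g := by
    have hone : ∀ i j : Fin a, (i : ℕ) < (j : ℕ) → (g.1 i : ℕ) + 1 ≤ (g.1 j : ℕ) :=
      fun i j hij => g.2 (show i < j from hij)
    refine ⟨fun j => ⟨(g.1 j : ℕ) + p * (j : ℕ), ?_⟩, ?_⟩
    · have hja : (j : ℕ) < a := j.2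
      have hhigh := chain_aux hone ((a - 1) - (j : ℕ)) j ⟨a - 1, by omega⟩ (by simp; omega)
      have hgb : ((g.1 ⟨a - 1, by omega⟩ : ℕ)) < n + p - a * p := (g.1 _).2
      set t := (j : ℕ)
      set r := (a - 1) - t with hr
      have har : a = t + r + 1 := by omega
      have h1 : a * p = t * p + r * p + p := by rw [har]; ring
      have h2 : r * 1 = r := by ring
      have h4 : p * t = t * p := by ring
      omega
    · intro i j hij
      have hij' : (i : ℕ) < (j : ℕ) := hij
      have hchain := chain_aux hone ((j : ℕ) - (i : ℕ)) i j (by omega)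
      show ((g.1 i : ℕ) + p * (i : ℕ)) + p + 1 ≤ (g.1 j : ℕ) + p * (j : ℕ)
      set c := (j : ℕ) - (i : ℕ) with hc
      have h1 : c * 1 = c := by ring
      have h2 : p * (j : ℕ) = p * (i : ℕ) + p * c := by
        rw [show (j:ℕ) = (i:ℕ) + c by omega]; ring
      have h3 : p ≤ p * c := Nat.le_mul_of_pos_right p (by omega)
      omega
  left_inv := by
    rintro ⟨f, hf⟩
    have hf' : ∀ i j : Fin a, (i : ℕ) < (j : ℕ) → (f i : ℕ) + (p + 1) ≤ (f j : ℕ) :=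
      fun i j h => by have := hf i j h; omega
    apply Subtype.ext
    funext j
    apply Fin.ext
    show ((f j : ℕ) - p * (j : ℕ)) + p * (j : ℕ) = f j
    have hz : (0 : ℕ) < a := by have := j.2; omega
    have hlow := chain_aux hf' (j : ℕ) ⟨0, hz⟩ j (by simp)
    have h3 : (j : ℕ) * (p + 1) = (j:ℕ) * p + (j:ℕ) := by ring
    have h4 : p * (j:ℕ) = (j:ℕ) * p := by ring
    omega
  right_inv := by
    rintro ⟨g, hg⟩
    apply Subtype.ext
    funext j
    apply Fin.ext
    show ((g j : ℕ) + p * (j : ℕ)) - p * (j : ℕ) = g j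
    omega

/-- strictly monotone tuples ≃ subsets of given size. -/
def monoEquivFinset (m a : ℕ) :
    {g : Fin a → Fin m // StrictMono g} ≃ {s : Finset (Fin m) // s.card = a} where
  toFun g := ⟨Finset.univ.image g.1, by
    rw [Finset.card_image_of_injective _ g.2.injective]; simp⟩
  invFun s := ⟨s.1.orderEmbOfFin s.2, (s.1.orderEmbOfFin s.2).strictMono⟩
  left_inv := by
    rintro ⟨g, hg⟩
    apply Subtype.ext
    exact (Finset.orderEmbOfFin_unique _ (fun x => Finset.mem_image_of_mem _ (Finset.mem_univ x))
      hg).symm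
  right_inv := by
    rintro ⟨s, hs⟩
    apply Subtype.ext
    apply Finset.coe_injective
    rw [Finset.coe_image, Finset.coe_univ, Set.image_univ]
    exact Finset.range_orderEmbOfFin _ hs

/-- The number of Fibonacci `p`-strings of length `n` and weight `a`. -/
lemma card_fibstr (p n a : ℕ) :
    (Finset.univ.filter fun u : Fin n → Bool => IsFibStr p u ∧ wt u = a).card
      = (n + p - a * p).choose a := by
  rw [← Fintype.card_subtype]
  rw [Fintype.card_congr ((fibStrEquivSpread p n a).trans
    ((spreadEquivMono p n a).trans (monoEquivFinset (n + p - a * p) a)))]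
  rw [Fintype.card_finset_len]
  simp

lemma cubeCountD_eq_card (p n k d : ℕ) :
    cubeCountD p n k d = (Finset.univ.filter fun bt : (Fin n → Bool) × (Fin n → Bool) =>
      IsFibStr p bt.1 ∧ IsFibStr p bt.2 ∧ (∀ i, bt.1 i = true → bt.2 i = true) ∧
      (Finset.univ.filter fun i => bt.1 i ≠ bt.2 i).card = k ∧ wt bt.1 = d).card := by
  rw [cubeCountD, Nat.card_eq_fintype_card, Fintype.card_subtype]

section Poly
open MvPolynomial

variable (p n : ℕ)

/-- Base set of pairs. -/
noncomputable def pairSet (p n : ℕ) : Finset ((Fin n → Bool) × (Fin n → Bool)) :=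
  Finset.univ.filter fun bt =>
    IsFibStr p bt.1 ∧ IsFibStr p bt.2 ∧ (∀ i, bt.1 i = true → bt.2 i = true)

def Kval {n : ℕ} (bt : (Fin n → Bool) × (Fin n → Bool)) : ℕ :=
  (Finset.univ.filter fun i => bt.1 i ≠ bt.2 i).card

lemma step1 (p n : ℕ) :
    distCubePoly p n = ∑ bt ∈ pairSet p n,
      (MvPolynomial.X 0 : MvPolynomial (Fin 2) ℤ) ^ Kval bt * MvPolynomial.X 1 ^ wt bt.1 := by
  rw [← Finset.sum_fiberwise_of_maps_to (g := fun bt => (Kval bt, wt bt.1))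
    (t := Finset.range (n + 1) ×ˢ Finset.range (n + 1)) (fun bt _ => by
      simp only [Finset.mem_product, Finset.mem_range]
      constructor
      · exact Nat.lt_succ_of_le ((Finset.card_filter_le _ _).trans (by simp))
      · exact Nat.lt_succ_of_le ((Finset.card_filter_le _ _).trans (by simp)))]
  rw [distCubePoly, Finset.sum_product]
  apply Finset.sum_congr rfl
  intro k hk
  apply Finset.sum_congr rfl
  intro d hd
  have hcard : (Finset.filter (fun bt => (Kval bt, wt bt.1) = (k, d)) (pairSet p n)).card
      = cubeCountD p n k d := by
    rw [cubeCountD_eq_card, pairSet, Finset.filter_filter]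
    congr 1
    apply Finset.filter_congr
    intro bt _
    simp only [Prod.mk.injEq, Kval]
    tauto
  rw [Finset.sum_congr rfl (fun bt hbt => by
    simp only [Finset.mem_filter, Prod.mk.injEq] at hbt
    rw [hbt.2.1, hbt.2.2])]
  rw [Finset.sum_const, hcard, nsmul_eq_mul]
  ring
end Poly

def suppF {n : ℕ} (u : Fin n → Bool) : Finset (Fin n) :=
  Finset.univ.filter fun i => u i = true

def botOf {n : ℕ} (t : Fin n → Bool) (s : Finset (Fin n)) : Fin n → Bool :=
  fun i => t i && !(decide (i ∈ s))

lemma step2 (p n : ℕ) :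
    (∑ bt ∈ pairSet p n,
      (MvPolynomial.X 0 : MvPolynomial (Fin 2) ℤ) ^ Kval bt * MvPolynomial.X 1 ^ wt bt.1)
    = ∑ t ∈ Finset.univ.filter fun u : Fin n → Bool => IsFibStr p u,
        ∑ s ∈ (suppF t).powerset,
          (MvPolynomial.X 0 : MvPolynomial (Fin 2) ℤ) ^ s.card
            * MvPolynomial.X 1 ^ ((suppF t \ s).card) := by
  rw [Finset.sum_sigma']
  apply Finset.sum_bij'
    (i := fun bt _ => (⟨bt.2, Finset.univ.filter fun i => bt.1 i ≠ bt.2 i⟩ :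
      Σ _t : Fin n → Bool, Finset (Fin n)))
    (j := fun x _ => ((botOf x.1 x.2, x.1) : (Fin n → Bool) × (Fin n → Bool)))
  · -- hi : image in sigma set
    rintro ⟨b, t⟩ hbt
    simp only [pairSet, Finset.mem_filter, Finset.mem_univ, true_and] at hbt
    obtain ⟨hb, ht, hmono⟩ := hbt
    simp only [Finset.mem_sigma, Finset.mem_filter, Finset.mem_univ, true_and,
      Finset.mem_powerset]
    refine ⟨ht, ?_⟩
    intro i hi
    simp only [Finset.mem_filter, Finset.mem_univ, true_and] at hi
    simp only [suppF, Finset.mem_filter, Finset.mem_univ, true_and]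
    cases hbi : b i with
    | true => exact hmono i hbi
    | false =>
      cases hti : t i with
      | true => rfl
      | false => exact absurd (by rw [hbi, hti]) hi
  · -- hj : image in pairSet
    rintro ⟨t, s⟩ hx
    simp only [Finset.mem_sigma, Finset.mem_filter, Finset.mem_univ, true_and,
      Finset.mem_powerset] at hx
    obtain ⟨ht, hs⟩ := hx
    have hmono : ∀ i, botOf t s i = true → t i = true := by
      intro i hi
      simp only [botOf, Bool.and_eq_true] at hi
      exact hi.1
    refine Finset.mem_filter.2 ⟨Finset.mem_univ _, ?_, ht, hmono⟩
    intro i j hi hj hij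
    exact ht i j (hmono i hi) (hmono j hj) hij
  · -- left_inv : pair roundtrip
    rintro ⟨b, t⟩ hbt
    simp only [pairSet, Finset.mem_filter, Finset.mem_univ, true_and] at hbt
    obtain ⟨hb, ht, hmono⟩ := hbt
    have : botOf t (Finset.univ.filter fun i => b i ≠ t i) = b := by
      funext i
      simp only [botOf]
      cases hbi : b i with
      | true =>
        have hti : t i = true := hmono i hbi
        simp [hti, hbi]
      | false =>
        cases hti : t i with
        | true => simp [hti, hbi]
        | false => simp [hti, hbi]
    simp [this]
  · -- right_inv : sigma roundtrip
    rintro ⟨t, s⟩ hx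
    simp only [Finset.mem_sigma, Finset.mem_filter, Finset.mem_univ, true_and,
      Finset.mem_powerset] at hx
    obtain ⟨ht, hs⟩ := hx
    have hdiff : (Finset.univ.filter fun i => botOf t s i ≠ t i) = s := by
      ext i
      simp only [Finset.mem_filter, Finset.mem_univ, true_and, botOf]
      constructor
      · intro h
        by_contra hc
        simp [hc] at h
      · intro h
        have hti : t i = true := by
          have := hs h
          simpa [suppF] using this
        simp [h, hti]
    exact Sigma.ext rfl (by simp [hdiff])
  · -- values agree
    rintro ⟨b, t⟩ hbt
    simp only [pairSet, Finset.mem_filter, Finset.mem_univ, true_and] at hbt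
    obtain ⟨hb, ht, hmono⟩ := hbt
    have h1 : Kval ((b, t) : (Fin n → Bool) × (Fin n → Bool))
        = (Finset.univ.filter fun i => b i ≠ t i).card := rfl
    have h2 : wt b = (suppF t \ (Finset.univ.filter fun i => b i ≠ t i)).card := by
      unfold wt
      congr 1
      ext i
      simp only [Finset.mem_filter, Finset.mem_univ, true_and, Finset.mem_sdiff, suppF]
      constructor
      · intro hbi
        exact ⟨hmono i hbi, by simp [hbi, hmono i hbi]⟩
      · rintro ⟨hti, hne⟩
        simp only [ne_eq, not_not] at hne
        rw [hne, hti]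
    rw [h1, h2]

lemma step3 (p n : ℕ) :
    (∑ t ∈ Finset.univ.filter fun u : Fin n → Bool => IsFibStr p u,
        ∑ s ∈ (suppF t).powerset,
          (MvPolynomial.X 0 : MvPolynomial (Fin 2) ℤ) ^ s.card
            * MvPolynomial.X 1 ^ ((suppF t \ s).card))
    = ∑ t ∈ Finset.univ.filter fun u : Fin n → Bool => IsFibStr p u,
        (MvPolynomial.X 0 + MvPolynomial.X 1 : MvPolynomial (Fin 2) ℤ) ^ wt t := by
  apply Finset.sum_congr rfl
  intro t _
  have := Finset.prod_add (fun _ : Fin n => (MvPolynomial.X 0 : MvPolynomial (Fin 2) ℤ))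
    (fun _ => MvPolynomial.X 1) (suppF t)
  simp only [Finset.prod_const] at this
  rw [show wt t = (suppF t).card from rfl, ← this]

lemma step4 (p n : ℕ) :
    (∑ t ∈ Finset.univ.filter fun u : Fin n → Bool => IsFibStr p u,
        (MvPolynomial.X 0 + MvPolynomial.X 1 : MvPolynomial (Fin 2) ℤ) ^ wt t)
    = ∑ a ∈ Finset.range (n + 1),
        ((n + p - a * p).choose a : MvPolynomial (Fin 2) ℤ) *
          (MvPolynomial.X 0 + MvPolynomial.X 1) ^ a := by
  rw [← Finset.sum_fiberwise_of_maps_to (g := fun u => wt u) (t := Finset.range (n + 1))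
    (fun u _ => by
      simp only [Finset.mem_range]
      exact Nat.lt_succ_of_le ((Finset.card_filter_le _ _).trans (by simp)))]
  apply Finset.sum_congr rfl
  intro a _
  rw [Finset.sum_congr rfl (fun u hu => by
    simp only [Finset.mem_filter] at hu
    rw [hu.2])]
  rw [Finset.sum_const, Finset.filter_filter, card_fibstr p n a, nsmul_eq_mul]

/-- `D_{Γ^p_n}(x,q) = Σ_{a=0}^{⌊(n+p)/(p+1)⌋} C(n - ap + p, a)·(q+x)^a`
(with `x = X 0`, `q = X 1`). -/
theorem distCubePoly_eq (p n : ℕ) (hp : 1 ≤ p) :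
    distCubePoly p n =
      ∑ a ∈ Finset.range ((n + p) / (p + 1) + 1),
        ((n + p - a * p).choose a : MvPolynomial (Fin 2) ℤ) *
          (MvPolynomial.X 1 + MvPolynomial.X 0) ^ a := by

  rw [step1, step2, step3, step4]
  rw [show (MvPolynomial.X 1 + MvPolynomial.X 0 : MvPolynomial (Fin 2) ℤ)
    = MvPolynomial.X 0 + MvPolynomial.X 1 from add_comm _ _]
  apply (Finset.sum_subset ?_ ?_).symm
  · intro a ha
    simp only [Finset.mem_range] at ha ⊢
    have h1 : (n + p) / (p + 1) < n + 1 := by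
      rw [Nat.div_lt_iff_lt_mul (by omega : 0 < p + 1)]
      have : (n + 1) * (p + 1) = n * p + n + p + 1 := by ring
      omega
    omega
  · intro a _ ha
    simp only [Finset.mem_range, not_lt] at ha
    have hdl : (n + p) / (p + 1) < a := by omega
    have h2 := (Nat.div_lt_iff_lt_mul (by omega : 0 < p + 1)).1 hdl
    have h0 : 1 ≤ a := le_trans (Nat.le_add_left 1 _) ha
    have h4 : n + p - a * p < a := by
      have h3 : a * (p + 1) = a * p + a := by ring
      omega
    rw [Nat.choose_eq_zero_of_lt h4]
    simp
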